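/- arXiv:2512.12125 — 2 statements merged into one kernel-verified Lean document; each statement's English description precedes it below -/
import Mathlib

section
/- Let x = 0 and let y be the D×(N−D) matrix over GF(q) with (1,1)-entry 1 and all other entries 0. For 1 ≤ i ≤ D, a matrix z satisfies rank(z) = i and rank(z−y) = i−1 if and only if rank(z) = i, rank(z−y) = i−1, rank(|z) = i−1, rank(z̄) = i−1, and rank(⌜z) = i−1 (i.e., the conditions rank(z)=i and rank(z−y)=i−1 force all three truncated ranks to equal i−1). -/
noncomputable section

open Matrix

/-- The `D × m` matrix with `(1,1)`-entry `1` and all other entries `0`. -/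
def yMat (F : Type) [Field F] (D m : ℕ) : Matrix (Fin D) (Fin m) F :=
  Matrix.of fun i j => if (i : ℕ) = 0 ∧ (j : ℕ) = 0 then 1 else 0

/-- `z` with its first column replaced by zeros. -/
def zeroCol {F : Type} [Field F] {D m : ℕ} (z : Matrix (Fin D) (Fin m) F) :
    Matrix (Fin D) (Fin m) F :=
  Matrix.of fun i j => if (j : ℕ) = 0 then 0 else z i j

/-- `z` with its first row replaced by zeros. -/
def zeroRow {F : Type} [Field F] {D m : ℕ} (z : Matrix (Fin D) (Fin m) F) :
    Matrix (Fin D) (Fin m) F :=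
  Matrix.of fun i j => if (i : ℕ) = 0 then 0 else z i j

/-- `z` with both its first row and first column replaced by zeros. -/
def zeroBoth {F : Type} [Field F] {D m : ℕ} (z : Matrix (Fin D) (Fin m) F) :
    Matrix (Fin D) (Fin m) F :=
  Matrix.of fun i j => if (i : ℕ) = 0 ∨ (j : ℕ) = 0 then 0 else z i j

/-! Let `W` be the span of the columns of `z` other than the first, `c` the first column and `e`
the first unit vector, so that `rank z = dim (W + ⟨c⟩)` and `rank (z - y) = dim (W + ⟨c - e⟩)`.
The rank drop forces `c - e ∈ W` and `c ∉ W`, hence `e ∉ W` and `rank |z = dim W = rank (z - y)`;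
transposing gives the same for `z̄`. Finally `|z + y` has columns spanning `W + ⟨e⟩`, so its rank
exceeds that of `(|z + y) - y = |z` by one, and the row statement applied to it gives
`rank ⌜z = rank |z`. -/

open Function Module Set Submodule

theorem Submodule.span_range_update {R M ι : Type*} [Semiring R] [AddCommMonoid M] [Module R M]
    [DecidableEq ι] (f : ι → M) (b : ι) (v : M) :
    span R (range (update f b v)) = span R (range (update f b 0)) ⊔ span R {v} := by
  apply le_antisymm
  · rw [span_le]
    rintro _ ⟨j, rfl⟩
    rcases eq_or_ne j b with rfl | hj
    · simpa using mem_sup_right (mem_span_singleton_self v)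
    · simpa [hj] using mem_sup_left (T := span R {v})
        (subset_span (mem_range_self (f := update f b 0) j))
  · refine sup_le (span_le.2 ?_) (span_le.2 ?_)
    · rintro _ ⟨j, rfl⟩
      rcases eq_or_ne j b with rfl | hj
      · simp
      · simpa [hj] using subset_span (R := R) (mem_range_self (f := update f b v) j)
    · simpa using subset_span (R := R) (mem_range_self (f := update f b v) b)

theorem Submodule.mem_and_notMem_of_finrank_sup_span_singleton_eq_succ {K V : Type*}
    [DivisionRing K] [AddCommGroup V] [Module K V] [FiniteDimensional K V] {W : Submodule K V} {c d : V}
    (h : finrank K ↥(W ⊔ span K {c}) = finrank K ↥(W ⊔ span K {d}) + 1) : d ∈ W ∧ c ∉ W := by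
  have hc : c ∉ W := by
    intro hc
    rw [sup_eq_left.2 ((span_singleton_le_iff_mem c W).2 hc)] at h
    have := finrank_mono (le_sup_left : W ≤ W ⊔ span K {d})
    omega
  refine ⟨by_contra fun hd => ?_, hc⟩
  rw [finrank_sup_span_singleton hc, finrank_sup_span_singleton hd] at h
  omega

namespace Matrix

theorem col_updateCol {α m n : Type*} [DecidableEq n] (A : Matrix m n α) (b : n) (c : m → α) :
    (A.updateCol b c).col = update A.col b c := by
  ext j i
  rcases eq_or_ne j b with rfl | hj <;> simp [col_apply, *]

variable {K m n : Type*} [Field K] [Fintype m] [Fintype n] [DecidableEq n]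

omit [Fintype m] in
theorem rank_updateCol (A : Matrix m n K) (b : n) (c : m → K) :
    (A.updateCol b c).rank =
      finrank K ↥(span K (range (A.updateCol b 0).col) ⊔ span K {c}) := by
  rw [rank_eq_finrank_span_cols, col_updateCol, col_updateCol, span_range_update]

theorem rank_updateCol_zero_of_rank_eq_succ {A B : Matrix m n K} {b : n}
    (hAB : A.updateCol b 0 = B.updateCol b 0) (h : A.rank = B.rank + 1) :
    (A.updateCol b 0).rank = B.rank ∧ A.col b - B.col b ∉ span K (range (A.updateCol b 0).col) := by
  set W := span K (range (A.updateCol b 0).col)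
  have hA : A.rank = finrank K ↥(W ⊔ span K {A.col b}) := by
    conv_lhs => rw [← updateCol_eq_self A b]
    exact rank_updateCol A b _
  have hB : B.rank = finrank K ↥(W ⊔ span K {B.col b}) := by
    conv_lhs => rw [← updateCol_eq_self B b]
    rw [rank_updateCol, ← hAB]
    rfl
  obtain ⟨hd, hc⟩ := mem_and_notMem_of_finrank_sup_span_singleton_eq_succ (hA ▸ hB ▸ h)
  rw [sup_eq_left.2 ((span_singleton_le_iff_mem _ _).2 hd)] at hB
  exact ⟨(rank_eq_finrank_span_cols _).trans hB.symm,
    fun he => hc (by simpa using add_mem he hd)⟩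

variable [DecidableEq m]

theorem rank_updateCol_zero_of_rank_sub_single (A : Matrix m n K) (a : m) (b : n)
    (h : A.rank = (A - single a b 1).rank + 1) :
    (A.updateCol b 0).rank = (A - single a b 1).rank ∧
      (A.updateCol b (Pi.single a 1)).rank = (A - single a b 1).rank + 1 := by
  have hAB : A.updateCol b 0 = (A - single a b 1).updateCol b 0 := by
    ext i j
    obtain rfl | hj := eq_or_ne j b
    · simp
    · simp [single, hj, hj.symm]
  have hcol : A.col b - (A - single a b 1).col b = Pi.single a 1 := by
    ext i
    obtain rfl | hi := eq_or_ne i a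
    · simp [single]
    · simp [single, hi, hi.symm]
  obtain ⟨hrank, he⟩ := rank_updateCol_zero_of_rank_eq_succ hAB h
  rw [hcol] at he
  refine ⟨hrank, ?_⟩
  rw [rank_updateCol, finrank_sup_span_singleton he, ← rank_eq_finrank_span_cols, hrank]

theorem rank_updateRow_zero_of_rank_sub_single (A : Matrix m n K) (a : m) (b : n)
    (h : A.rank = (A - single a b 1).rank + 1) :
    (A.updateRow a 0).rank = (A - single a b 1).rank := by
  have hT : Aᵀ.rank = (Aᵀ - single b a 1).rank + 1 := by
    rwa [← transpose_single, ← transpose_sub, rank_transpose, rank_transpose]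
  have := (rank_updateCol_zero_of_rank_sub_single Aᵀ b a hT).1
  rwa [← transpose_single, ← transpose_sub, rank_transpose, updateCol_transpose,
    rank_transpose] at this

theorem rank_updateRow_updateCol_zero_of_rank_sub_single (A : Matrix m n K) (a : m) (b : n)
    (h : A.rank = (A - single a b 1).rank + 1) :
    ((A.updateCol b 0).updateRow a 0).rank = (A - single a b 1).rank := by
  obtain ⟨hcol, hunit⟩ := rank_updateCol_zero_of_rank_sub_single A a b h
  set A' := A.updateCol b (Pi.single a 1)
  have hsub : A' - single a b 1 = A.updateCol b 0 := by
    ext i j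
    obtain rfl | hj := eq_or_ne j b
    · obtain rfl | hi := eq_or_ne i a
      · simp [A', single]
      · simp [A', single, hi, hi.symm]
    · simp [A', single, hj, hj.symm]
  have hrow : A'.updateRow a 0 = (A.updateCol b 0).updateRow a 0 := by
    ext i j
    obtain rfl | hi := eq_or_ne i a
    · simp
    · simp [A', updateCol_apply, hi]
  rw [← hrow, rank_updateRow_zero_of_rank_sub_single A' a b (by rw [hsub, hcol, hunit]), hsub,
    hcol]

end Matrix

section FirstRowCol

variable {F : Type} [Field F] {D m : ℕ}

theorem yMat_eq_single [NeZero D] [NeZero m] : yMat F D m = single 0 0 1 := by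
  ext i j
  simp [yMat, single, eq_comm]

theorem zeroCol_eq_updateCol [NeZero m] (z : Matrix (Fin D) (Fin m) F) :
    zeroCol z = z.updateCol 0 0 := by
  ext i j
  simp [zeroCol, updateCol_apply]

theorem zeroRow_eq_updateRow [NeZero D] (z : Matrix (Fin D) (Fin m) F) :
    zeroRow z = z.updateRow 0 0 := by
  ext i j
  simp [zeroRow, updateRow_apply]

theorem zeroBoth_eq_updateRow_updateCol [NeZero D] [NeZero m] (z : Matrix (Fin D) (Fin m) F) :
    zeroBoth z = (z.updateCol 0 0).updateRow 0 0 := by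
  ext i j
  simp [zeroBoth, updateRow_apply, updateCol_apply, ite_or]

end FirstRowCol

theorem stmt_6_general (F : Type) [Field F] (D N : ℕ)
    (i : ℕ) (hi1 : 1 ≤ i)
    (z : Matrix (Fin D) (Fin (N - D)) F) :
    (z.rank = i ∧ (z - yMat F D (N - D)).rank = i - 1) ↔
    (z.rank = i ∧ (z - yMat F D (N - D)).rank = i - 1 ∧
      (zeroCol z).rank = i - 1 ∧ (zeroRow z).rank = i - 1 ∧ (zeroBoth z).rank = i - 1) := by
  refine ⟨fun ⟨hz, hzy⟩ => ?_, fun h => ⟨h.1, h.2.1⟩⟩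
  have : NeZero D := ⟨by have := z.rank_le_height; omega⟩
  have : NeZero (N - D) := ⟨by have := z.rank_le_width; omega⟩
  rw [yMat_eq_single] at hzy ⊢
  have h : z.rank = (z - single 0 0 1).rank + 1 := by omega
  rw [zeroCol_eq_updateCol, zeroRow_eq_updateRow, zeroBoth_eq_updateRow_updateCol, ← hzy]
  exact ⟨hz, rfl, (rank_updateCol_zero_of_rank_sub_single z 0 0 h).1,
    rank_updateRow_zero_of_rank_sub_single z 0 0 h,
    rank_updateRow_updateCol_zero_of_rank_sub_single z 0 0 h⟩

theorem stmt_6 (F : Type) [Field F] [Fintype F] (D N : ℕ)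
    (h1 : N > 2 * D) (h2 : 2 * D ≥ 6)
    (i : ℕ) (hi1 : 1 ≤ i) (hi2 : i ≤ D)
    (z : Matrix (Fin D) (Fin (N - D)) F) :
    (z.rank = i ∧ (z - yMat F D (N - D)).rank = i - 1) ↔
    (z.rank = i ∧ (z - yMat F D (N - D)).rank = i - 1 ∧
      (zeroCol z).rank = i - 1 ∧ (zeroRow z).rank = i - 1 ∧ (zeroBoth z).rank = i - 1) :=
  stmt_6_general F D N i hi1 z

end
end

section
/- Let y be the D×(N−D) matrix over GF(q) with (1,1)-entry 1 and zeros elsewhere. If z is a matrix with rank(z) = rank(z−y) = i, rank(|z) = i, rank(z̄) = i−1, rank(⌜z) = i−1, then: the number of common neighbors w of the zero matrix and y (i.e., rank(w) = rank(w−y) = 1) with rank(z−w) = i−1 equals q^{i−1}, and the number of such w with rank(z−w) = i+1 equals q^D − q^i. -/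
noncomputable section

open Matrix

/-!
Write `e`, `f` for the first standard basis vectors, so that `y = e fᵀ`, and let `R` (resp. `C`)
be the span of the rows (resp. columns) of `z` other than the first. Replacing the first row of a
matrix by `v` gives rank `dim (span {v} ⊔ R)`, i.e. `dim R` or `dim R + 1` according as `v ∈ R`.
Read this way the hypotheses say `dim R = i - 1`, `dim C = i`, the first rows of `z` and of
`z - y` lie outside `R`, and the first column of `z` lies in `C`; since clearing the first row
lowers the rank, also `e ∈ C`.

A rank-one `w` with `rank (w - y) = 1` is `e cᵀ` or `d fᵀ`. For `w = e cᵀ` only the first row of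
`z` changes, so `rank (z - w) = i - 1` iff `z₀ - c ∈ R`, and it is never `i + 1`; for `w = d fᵀ`
only the first column changes, so `rank (z - w) = i + 1` iff `d ∉ C`, and it is never `i - 1`.
The two counts are therefore `|R| = q^(i-1)` and `q^D - |C| = q^D - q^i`.
-/

open Matrix Module Submodule

section Span

variable {K V : Type*} [Field K] [AddCommGroup V] [Module K V]

theorem finrank_span_singleton_sup_of_mem {v : V} {W : Submodule K V} (h : v ∈ W) :
    finrank K ↥(K ∙ v ⊔ W) = finrank K W := by
  rw [sup_eq_right.mpr ((span_singleton_le_iff_mem v W).mpr h)]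

variable [FiniteDimensional K V]

theorem finrank_span_singleton_sup_of_notMem {v : V} {W : Submodule K V} (h : v ∉ W) :
    finrank K ↥(K ∙ v ⊔ W) = finrank K W + 1 := by
  rw [sup_comm, finrank_sup_span_singleton h]

theorem finrank_span_singleton_sup_le (v : V) (W : Submodule K V) :
    finrank K ↥(K ∙ v ⊔ W) ≤ finrank K W + 1 := by
  by_cases h : v ∈ W
  · rw [finrank_span_singleton_sup_of_mem h]
    exact Nat.le_succ _
  · rw [finrank_span_singleton_sup_of_notMem h]

theorem mem_of_finrank_span_singleton_sup_le {v : V} {W : Submodule K V}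
    (h : finrank K ↥(K ∙ v ⊔ W) ≤ finrank K W) : v ∈ W := by
  by_contra hv
  rw [finrank_span_singleton_sup_of_notMem hv] at h
  omega

theorem mem_of_le_sup_span_singleton {u : V} {W W' : Submodule K V} (hle : W ≤ W' ⊔ K ∙ u)
    (hlt : finrank K W' < finrank K W) : u ∈ W := by
  refine mem_of_finrank_span_singleton_sup_le ?_
  calc finrank K ↥(K ∙ u ⊔ W) ≤ finrank K ↥(K ∙ u ⊔ W') :=
        finrank_mono (sup_le le_sup_left (sup_comm W' _ ▸ hle))
    _ ≤ finrank K W' + 1 := finrank_span_singleton_sup_le u W'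
    _ ≤ finrank K W := hlt

theorem ncard_submodule [Finite K] (W : Submodule K V) :
    (W : Set V).ncard = Nat.card K ^ finrank K W := by
  rw [← Nat.card_coe_set_eq]
  exact Module.natCard_eq_pow_finrank (V := W)

end Span

section Matrix

variable {K : Type*} [Field K] {m n : Type*} [Fintype m] [Fintype n]

theorem mem_span_range_col_of_rank_sub_vecMulVec_lt {A : Matrix m n K} {u : m → K}
    {r : n → K} (h : (A - vecMulVec u r).rank < A.rank) : u ∈ span K (Set.range A.col) := by
  rw [rank_eq_finrank_span_cols, rank_eq_finrank_span_cols] at h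
  refine mem_of_le_sup_span_singleton (span_le.mpr ?_) h
  rintro _ ⟨l, rfl⟩
  refine mem_sup.mpr ⟨(A - vecMulVec u r)ᵀ l, subset_span ⟨l, rfl⟩, r l • u,
    smul_mem _ _ (mem_span_singleton_self u), ?_⟩
  ext k
  simp [vecMulVec_apply, mul_comm]

theorem rank_eq_finrank_span_singleton_sup (A : Matrix m n K) (i : m) :
    A.rank = finrank K ↥(K ∙ A i ⊔ span K (A '' {i}ᶜ)) := by
  rw [rank_eq_finrank_span_row, ← span_insert]
  exact congr_arg (fun s => finrank K (span K s)) (Set.insert_image_compl_eq_range A i).symm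

section

variable [DecidableEq m]

theorem rank_sub_single_vecMulVec (A : Matrix m n K) (i : m) (c : n → K) :
    (A - vecMulVec (Pi.single i 1) c).rank
      = finrank K ↥(K ∙ (A i - c) ⊔ span K (A '' {i}ᶜ)) := by
  have hrows : (A - vecMulVec (Pi.single i 1) c) '' {i}ᶜ = A '' {i}ᶜ :=
    Set.image_congr fun k hk => by ext l; simp [vecMulVec_apply, Pi.single_eq_of_ne hk]
  have hrow : (A - vecMulVec (Pi.single i 1) c) i = A i - c := by
    ext l
    simp [vecMulVec_apply]
  rw [rank_eq_finrank_span_singleton_sup _ i, hrows, hrow]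

theorem rank_single_vecMulVec {i : m} {c : n → K} (hc : c ≠ 0) :
    (vecMulVec (Pi.single i 1) c).rank = 1 := by
  have hrows : span K (vecMulVec (Pi.single i 1) c '' {i}ᶜ) = ⊥ := by
    rw [eq_bot_iff, span_le]
    rintro _ ⟨k, hk, rfl⟩
    ext l
    simp [vecMulVec_apply, Pi.single_eq_of_ne hk]
  have hrow : vecMulVec (Pi.single i 1) c i = c := by
    ext l
    simp [vecMulVec_apply]
  rw [rank_eq_finrank_span_singleton_sup _ i, hrows, sup_bot_eq, hrow, finrank_span_singleton hc]

end

section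

variable [DecidableEq n]

theorem rank_sub_vecMulVec_single (A : Matrix m n K) (j : n) (d : m → K) :
    (A - vecMulVec d (Pi.single j 1)).rank
      = finrank K ↥(K ∙ (Aᵀ j - d) ⊔ span K (Aᵀ '' {j}ᶜ)) := by
  rw [← rank_transpose, transpose_sub, transpose_vecMulVec, rank_sub_single_vecMulVec]

theorem rank_vecMulVec_single {j : n} {d : m → K} (hd : d ≠ 0) :
    (vecMulVec d (Pi.single j 1)).rank = 1 := by
  rw [← rank_transpose, transpose_vecMulVec, rank_single_vecMulVec hd]

end

variable [DecidableEq m] [DecidableEq n]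

theorem exists_eq_single_vecMulVec_or_eq_vecMulVec_single {w : Matrix m n K} {i : m} {j : n}
    (hw : w.rank = 1) (hwy : (w - vecMulVec (Pi.single i 1) (Pi.single j 1)).rank = 1) :
    (∃ c, w = vecMulVec (Pi.single i 1) c) ∨ ∃ d, w = vecMulVec d (Pi.single j 1) := by
  rw [rank_eq_finrank_span_singleton_sup w i] at hw
  rw [rank_sub_single_vecMulVec] at hwy
  set T := span K (w '' {i}ᶜ)
  rcases eq_or_ne T ⊥ with hT | hT
  · refine Or.inl ⟨w i, ?_⟩
    ext k l
    rcases eq_or_ne k i with rfl | hk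
    · simp [vecMulVec_apply]
    · have hwk : w k = 0 := (mem_bot K).mp (hT ▸ subset_span ⟨k, hk, rfl⟩)
      simp [vecMulVec_apply, hk, hwk]
  · -- all rows then lie on the line `T`, which must contain `Pi.single j 1`
    have hTpos : 1 ≤ finrank K T := one_le_finrank_iff.mpr hT
    have hwi : w i ∈ T := mem_of_finrank_span_singleton_sup_le (by omega)
    have hwf : w i - Pi.single j 1 ∈ T := mem_of_finrank_span_singleton_sup_le (by omega)
    have hf : Pi.single j (1 : K) ∈ T := by simpa using sub_mem hwi hwf
    rw [finrank_span_singleton_sup_of_mem hwi] at hw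
    have hTf : T = K ∙ Pi.single j 1 :=
      (eq_of_le_of_finrank_le ((span_singleton_le_iff_mem _ _).mpr hf)
        (by rw [hw, finrank_span_singleton (by simp)])).symm
    have hrow : ∀ k, w k ∈ K ∙ Pi.single j 1 := by
      intro k
      rw [← hTf]
      rcases eq_or_ne k i with rfl | hk
      · exact hwi
      · exact subset_span ⟨k, hk, rfl⟩
    choose d hd using fun k => mem_span_singleton.mp (hrow k)
    refine Or.inr ⟨d, ?_⟩
    ext k l
    simp [vecMulVec_apply, ← hd k]

section Count

variable {z : Matrix m n K} {i₀ : m} {j₀ : n} {k : ℕ}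

theorem setOf_rank_sub_eq_image_span_rows
    (hR : finrank K (span K (z '' {i₀}ᶜ)) = k) (hC : finrank K (span K (zᵀ '' {j₀}ᶜ)) = k + 1)
    (hz : z i₀ ∉ span K (z '' {i₀}ᶜ)) (hzy : z i₀ - Pi.single j₀ 1 ∉ span K (z '' {i₀}ᶜ)) :
    {w | w.rank = 1 ∧ (w - vecMulVec (Pi.single i₀ 1) (Pi.single j₀ 1)).rank = 1 ∧
        (z - w).rank = k}
      = (fun r => vecMulVec (Pi.single i₀ 1) (z i₀ - r)) '' span K (z '' {i₀}ᶜ) := by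
  ext w
  constructor
  · rintro ⟨hw, hwy, hzw⟩
    rcases exists_eq_single_vecMulVec_or_eq_vecMulVec_single hw hwy with ⟨c, rfl⟩ | ⟨d, rfl⟩
    · rw [rank_sub_single_vecMulVec] at hzw
      exact ⟨z i₀ - c, mem_of_finrank_span_singleton_sup_le (by omega),
        by simp only [sub_sub_cancel]⟩
    · rw [rank_sub_vecMulVec_single] at hzw
      have := finrank_mono (le_sup_right : span K (zᵀ '' {j₀}ᶜ) ≤ K ∙ (zᵀ j₀ - d) ⊔ _)
      omega
  · rintro ⟨r, hr, rfl⟩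
    refine ⟨rank_single_vecMulVec fun h => hz ?_, ?_, ?_⟩
    · rwa [sub_eq_zero.mp h]
    · rw [← vecMulVec_sub, rank_single_vecMulVec]
      intro h
      rw [sub_right_comm, sub_eq_zero] at h
      exact hzy (h ▸ hr)
    · rw [rank_sub_single_vecMulVec, sub_sub_cancel, finrank_span_singleton_sup_of_mem hr, hR]

theorem setOf_rank_sub_eq_image_compl_span_cols
    (hR : finrank K (span K (z '' {i₀}ᶜ)) = k) (hC : finrank K (span K (zᵀ '' {j₀}ᶜ)) = k + 1)
    (hzc : zᵀ j₀ ∈ span K (zᵀ '' {j₀}ᶜ)) (he : Pi.single i₀ 1 ∈ span K (zᵀ '' {j₀}ᶜ)) :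
    {w | w.rank = 1 ∧ (w - vecMulVec (Pi.single i₀ 1) (Pi.single j₀ 1)).rank = 1 ∧
        (z - w).rank = k + 2}
      = (fun d => vecMulVec d (Pi.single j₀ 1)) '' (span K (zᵀ '' {j₀}ᶜ) : Set (m → K))ᶜ := by
  ext w
  constructor
  · rintro ⟨hw, hwy, hzw⟩
    rcases exists_eq_single_vecMulVec_or_eq_vecMulVec_single hw hwy with ⟨c, rfl⟩ | ⟨d, rfl⟩
    · rw [rank_sub_single_vecMulVec] at hzw
      have := finrank_span_singleton_sup_le (z i₀ - c) (span K (z '' {i₀}ᶜ))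
      omega
    · rw [rank_sub_vecMulVec_single] at hzw
      refine ⟨d, fun hd => ?_, rfl⟩
      rw [finrank_span_singleton_sup_of_mem (sub_mem hzc hd)] at hzw
      omega
  · rintro ⟨d, hd, rfl⟩
    have hzd : zᵀ j₀ - d ∉ span K (zᵀ '' {j₀}ᶜ) := fun h => hd (by simpa using sub_mem hzc h)
    refine ⟨rank_vecMulVec_single ?_, ?_, ?_⟩
    · rintro rfl
      exact hd (zero_mem _)
    · rw [← sub_vecMulVec, rank_vecMulVec_single]
      intro h
      exact hd (sub_eq_zero.mp h ▸ he)
    · rw [rank_sub_vecMulVec_single, finrank_span_singleton_sup_of_notMem hzd, hC]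

theorem ncard_setOf_rank_sub [Finite K]
    (hz : z.rank = k + 1) (hzy : (z - vecMulVec (Pi.single i₀ 1) (Pi.single j₀ 1)).rank = k + 1)
    (hc : (z - vecMulVec (zᵀ j₀) (Pi.single j₀ 1)).rank = k + 1)
    (hr : (z - vecMulVec (Pi.single i₀ 1) (z i₀)).rank = k) :
    {w | w.rank = 1 ∧ (w - vecMulVec (Pi.single i₀ 1) (Pi.single j₀ 1)).rank = 1 ∧
        (z - w).rank = k}.ncard = Nat.card K ^ k ∧
    {w | w.rank = 1 ∧ (w - vecMulVec (Pi.single i₀ 1) (Pi.single j₀ 1)).rank = 1 ∧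
        (z - w).rank = k + 2}.ncard = Nat.card K ^ Nat.card m - Nat.card K ^ (k + 1) := by
  set R := span K (z '' {i₀}ᶜ)
  set C := span K (zᵀ '' {j₀}ᶜ)
  have hR : finrank K R = k := by
    rwa [rank_sub_single_vecMulVec, sub_self, span_zero_singleton, bot_sup_eq] at hr
  have hC : finrank K C = k + 1 := by
    rwa [rank_sub_vecMulVec_single, sub_self, span_zero_singleton, bot_sup_eq] at hc
  have hzR : z i₀ ∉ R := fun h => by
    rw [rank_eq_finrank_span_singleton_sup z i₀, finrank_span_singleton_sup_of_mem h] at hz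
    omega
  have hzyR : z i₀ - Pi.single j₀ 1 ∉ R := fun h => by
    rw [rank_sub_single_vecMulVec, finrank_span_singleton_sup_of_mem h] at hzy
    omega
  have hzC : zᵀ j₀ ∈ C := mem_of_finrank_span_singleton_sup_le (by
    rw [← rank_eq_finrank_span_singleton_sup, rank_transpose]
    omega)
  have heC : Pi.single i₀ 1 ∈ C := by
    have hcols : span K (Set.range z.col) = C := by
      rw [← Set.insert_image_compl_eq_range z.col j₀, span_insert]
      exact sup_eq_right.mpr ((span_singleton_le_iff_mem _ _).mpr hzC)
    exact hcols ▸ mem_span_range_col_of_rank_sub_vecMulVec_lt (r := z i₀) (by omega)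
  constructor
  · rw [setOf_rank_sub_eq_image_span_rows hR hC hzR hzyR,
      Set.ncard_image_of_injective _ ?_, ncard_submodule, hR]
    intro r s h
    funext l
    simpa [vecMulVec_apply] using congr_fun (congr_fun h i₀) l
  · rw [setOf_rank_sub_eq_image_compl_span_cols hR hC hzC heC,
      Set.ncard_image_of_injective _ ?_, Set.ncard_compl, ncard_submodule, hC, Nat.card_fun]
    intro d d' h
    funext k
    simpa [vecMulVec_apply] using congr_fun (congr_fun h k) j₀

end Count

end Matrix

theorem yMat_eq_vecMulVec (F : Type) [Field F] (D m : ℕ) [NeZero D] [NeZero m] :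
    yMat F D m = vecMulVec (Pi.single 0 1) (Pi.single 0 1) := by
  ext k l
  simp only [yMat, of_apply, Fin.val_eq_zero_iff, vecMulVec_apply, Pi.single_apply]
  split_ifs <;> simp_all

theorem zeroRow_eq_sub {F : Type} [Field F] {D m : ℕ} [NeZero D] (z : Matrix (Fin D) (Fin m) F) :
    zeroRow z = z - vecMulVec (Pi.single 0 1) (z 0) := by
  ext k l
  simp only [zeroRow, of_apply, Fin.val_eq_zero_iff, Matrix.sub_apply, vecMulVec_apply,
    Pi.single_apply]
  split_ifs with hk <;> simp [hk]

theorem zeroCol_eq_sub {F : Type} [Field F] {D m : ℕ} [NeZero m] (z : Matrix (Fin D) (Fin m) F) :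
    zeroCol z = z - vecMulVec (zᵀ 0) (Pi.single 0 1) := by
  ext k l
  simp only [zeroCol, of_apply, Fin.val_eq_zero_iff, Matrix.sub_apply, vecMulVec_apply,
    Pi.single_apply]
  split_ifs with hl <;> simp [hl]

theorem stmt_17_general (F : Type) [Field F] [Fintype F] (D N : ℕ)
    (h1 : N > 2 * D)
    (i : ℕ) (hi1 : 1 ≤ i) (hi2 : i ≤ D)
    (z : Matrix (Fin D) (Fin (N - D)) F)
    (hz : z.rank = i) (hzy : (z - yMat F D (N - D)).rank = i)
    (hc : (zeroCol z).rank = i) (hr : (zeroRow z).rank = i - 1) :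
    ({w : Matrix (Fin D) (Fin (N - D)) F |
        w.rank = 1 ∧ (w - yMat F D (N - D)).rank = 1 ∧ (z - w).rank = i - 1}.ncard : ℚ)
      = (Fintype.card F : ℚ) ^ (i - 1) ∧
    ({w : Matrix (Fin D) (Fin (N - D)) F |
        w.rank = 1 ∧ (w - yMat F D (N - D)).rank = 1 ∧ (z - w).rank = i + 1}.ncard : ℚ)
      = (Fintype.card F : ℚ) ^ D - (Fintype.card F : ℚ) ^ i := by
  have : NeZero D := ⟨by omega⟩
  have : NeZero (N - D) := ⟨by omega⟩
  obtain ⟨k, rfl⟩ := Nat.exists_eq_add_of_le' hi1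
  rw [Nat.add_sub_cancel] at hr ⊢
  rw [show k + 1 + 1 = k + 2 from rfl]
  rw [yMat_eq_vecMulVec] at hzy ⊢
  rw [zeroCol_eq_sub] at hc
  rw [zeroRow_eq_sub] at hr
  obtain ⟨hlow, hhigh⟩ := ncard_setOf_rank_sub hz hzy hc hr
  simp only [Nat.card_eq_fintype_card, Fintype.card_fin] at hlow hhigh
  have hpow : Fintype.card F ^ (k + 1) ≤ Fintype.card F ^ D :=
    Nat.pow_le_pow_right Fintype.card_pos hi2
  rw [hlow, hhigh, Nat.cast_sub hpow]
  push_cast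
  exact ⟨rfl, rfl⟩

theorem stmt_17 (F : Type) [Field F] [Fintype F] (D N : ℕ)
    (hq : Fintype.card F ≠ 2) (h1 : N > 2 * D) (h2 : 2 * D ≥ 6)
    (i : ℕ) (hi1 : 1 ≤ i) (hi2 : i ≤ D)
    (z : Matrix (Fin D) (Fin (N - D)) F)
    (hz : z.rank = i) (hzy : (z - yMat F D (N - D)).rank = i)
    (hc : (zeroCol z).rank = i) (hr : (zeroRow z).rank = i - 1)
    (hb : (zeroBoth z).rank = i - 1) :
    ({w : Matrix (Fin D) (Fin (N - D)) F |
        w.rank = 1 ∧ (w - yMat F D (N - D)).rank = 1 ∧ (z - w).rank = i - 1}.ncard : ℚ)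
      = (Fintype.card F : ℚ) ^ (i - 1) ∧
    ({w : Matrix (Fin D) (Fin (N - D)) F |
        w.rank = 1 ∧ (w - yMat F D (N - D)).rank = 1 ∧ (z - w).rank = i + 1}.ncard : ℚ)
      = (Fintype.card F : ℚ) ^ D - (Fintype.card F : ℚ) ^ i :=
  stmt_17_general F D N h1 i hi1 hi2 z hz hzy hc hr

end
end
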